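/- Fix an integer d ≥ 2 and let v : ℤ/dℤ → ℝ satisfy Σ_{r∈ℤ/dℤ} v_r·v_{r+i} = 1/√(d+1) for every i ≠ 0 and Σ_{r∈ℤ/dℤ} v_r² = 1. Define a_k = (1/√d)·Σ_{r∈ℤ/dℤ} exp(2πi·kr/d)·v_r for k ∈ ℤ/dℤ. Then |a_0|² = (√(d+1) + d − 1)/(d·√(d+1)) and |a_k|² = (√(d+1) − 1)/(d·√(d+1)) for every k ≠ 0; in particular the Fourier-transformed vector a is almost flat. -/

import Mathlib

/-!
By Wiener–Khinchin, `|a_k|²` is `1/d` times the Fourier transform of the autocorrelation of `v`.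
The autocorrelation is `1` at `0` and a constant `c = 1/√(d+1)` elsewhere, i.e. `(1 - c) δ₀ + c`,
whose transform is `1 - c + c·d·δ_{k,0}` by orthogonality of characters.
-/

open Finset

def autocorr {G : Type*} [AddCommGroup G] [Fintype G] (v : G → ℝ) (i : G) : ℝ :=
  ∑ r, v r * v (r + i)

section

variable {G : Type*} [AddCommGroup G] [Fintype G]

theorem AddChar.norm_sum_mul_sq_eq_sum_mul_autocorr (ψ : AddChar G ℂ) (v : G → ℝ) :
    ((‖∑ r, ψ r * v r‖ ^ 2 : ℝ) : ℂ) = ∑ i, ψ i * autocorr v i := by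
  have hconj : (starRingEnd ℂ) (∑ r, ψ r * v r) = ∑ t, ψ (-t) * v t := by
    simp [ψ.map_neg_eq_conj]
  calc ((‖∑ r, ψ r * v r‖ ^ 2 : ℝ) : ℂ)
      = ∑ t, ∑ r, ψ r * v r * (ψ (-t) * v t) := by
        rw [Complex.ofReal_pow, ← Complex.mul_conj', hconj, sum_mul_sum, sum_comm]
    _ = ∑ t, ∑ i, ψ i * (v t * v (t + i)) := by
        refine sum_congr rfl fun t _ => ?_
        rw [← Equiv.sum_comp (Equiv.addLeft t)]
        refine sum_congr rfl fun i _ => ?_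
        have : ψ (t + i) * ψ (-t) = ψ i := by rw [← AddChar.map_add_eq_mul]; congr 1; abel
        simp only [Equiv.coe_addLeft, ← this]
        ring
    _ = ∑ i, ψ i * autocorr v i := by
        rw [sum_comm]; simp [autocorr, mul_sum]

theorem AddChar.sum_mul_eq_of_eq_on_ne_zero {R : Type*} [CommRing R] [DecidableEq G]
    (ψ : AddChar G R) (f : G → R) (c : R) (hf : ∀ i ≠ 0, f i = c) :
    ∑ i, ψ i * f i = f 0 - c + c * ∑ i, ψ i := by
  have : ∑ i, ψ i * f i = ∑ i, ψ i * c + (f 0 - c) := by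
    rw [← sum_erase_add _ _ (mem_univ 0), ← sum_erase_add _ _ (mem_univ 0),
      sum_congr rfl fun i hi => by rw [hf i (ne_of_mem_erase hi)]]
    simp only [mem_univ, sum_erase_eq_sub, map_zero_eq_one, one_mul, sub_add_cancel]; ring
  rw [this, ← sum_mul]; ring

end

theorem ZMod.stdAddChar_mul_eq_exp {d : ℕ} [NeZero d] (k r : ZMod d) :
    ZMod.stdAddChar (k * r)
      = Complex.exp (2 * Real.pi * Complex.I * ((k.val : ℂ) * (r.val : ℂ)) / d) := by
  have : k * r = ((k.val * r.val : ℤ) : ZMod d) := by push_cast; simp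
  rw [this, ZMod.stdAddChar_coe]; push_cast; ring_nf

theorem ZMod.sum_stdAddChar_mul {d : ℕ} [NeZero d] (k : ZMod d) :
    ∑ i, ZMod.stdAddChar (k * i) = if k = 0 then (d : ℂ) else 0 := by
  simpa [mul_comm, ZMod.card] using AddChar.sum_mulShift k (ZMod.isPrimitive_stdAddChar d)

theorem ZMod.norm_sum_stdAddChar_mul_sq_of_autocorr {d : ℕ} [NeZero d] (v : ZMod d → ℝ) (c : ℝ)
    (h0 : autocorr v 0 = 1) (hc : ∀ i ≠ 0, autocorr v i = c) (k : ZMod d) :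
    ‖∑ r, ZMod.stdAddChar (k * r) * (v r : ℂ)‖ ^ 2 = 1 - c + c * if k = 0 then (d : ℝ) else 0 := by
  set ψ := (ZMod.stdAddChar : AddChar (ZMod d) ℂ).mulShift k
  have hsum : ∑ i, ψ i * (autocorr v i : ℂ) = 1 - c + c * if k = 0 then (d : ℂ) else 0 := by
    rw [ψ.sum_mul_eq_of_eq_on_ne_zero _ (c : ℂ) fun i hi => by rw [hc i hi]]
    simp only [ψ, AddChar.mulShift_apply, ZMod.sum_stdAddChar_mul, h0, Complex.ofReal_one]
  have h := ψ.norm_sum_mul_sq_eq_sum_mul_autocorr v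
  apply Complex.ofReal_injective
  refine h.trans (hsum.trans ?_)
  split_ifs <;> push_cast <;> ring

theorem stmt_16 (d : ℕ) [NeZero d] (v : ZMod d → ℝ)
    (hcorr : ∀ i : ZMod d, i ≠ 0 →
      ∑ r : ZMod d, v r * v (r + i) = 1 / Real.sqrt ((d : ℝ) + 1))
    (hnorm : ∑ r : ZMod d, (v r) ^ 2 = 1)
    (a : ZMod d → ℂ)
    (ha : ∀ k : ZMod d, a k = ((1 / Real.sqrt d : ℝ) : ℂ) *
      ∑ r : ZMod d,
        Complex.exp (2 * Real.pi * Complex.I * ((k.val : ℂ) * (r.val : ℂ)) / d) * (v r : ℂ)) :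
    ‖a 0‖ ^ 2
        = (Real.sqrt ((d : ℝ) + 1) + (d : ℝ) - 1) / ((d : ℝ) * Real.sqrt ((d : ℝ) + 1)) ∧
    ∀ k : ZMod d, k ≠ 0 →
      ‖a k‖ ^ 2
        = (Real.sqrt ((d : ℝ) + 1) - 1) / ((d : ℝ) * Real.sqrt ((d : ℝ) + 1)) := by
  have hd : (0 : ℝ) < d := Nat.cast_pos.2 (NeZero.pos d)
  have hs : 0 < Real.sqrt ((d : ℝ) + 1) := Real.sqrt_pos.2 (by positivity)
  have h0 : autocorr v 0 = 1 := by simpa [autocorr, ← sq] using hnorm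
  have hak : ∀ k, ‖a k‖ ^ 2 = (1 - 1 / Real.sqrt ((d : ℝ) + 1) +
      1 / Real.sqrt ((d : ℝ) + 1) * if k = 0 then (d : ℝ) else 0) / d := by
    intro k
    rw [← ZMod.norm_sum_stdAddChar_mul_sq_of_autocorr v _ h0 hcorr k, ha k, norm_mul, mul_pow,
      Complex.norm_real, Real.norm_eq_abs, sq_abs, div_pow, Real.sq_sqrt hd.le]
    simp only [ZMod.stdAddChar_mul_eq_exp]
    ring
  refine ⟨?_, fun k hk => ?_⟩
  · rw [hak, if_pos rfl]; field_simp; ring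
  · rw [hak, if_neg hk]; field_simp; ring
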